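/- Let G = {·|*} (the game whose only Right option is * = {0|0} and with no Left option). In the universe U = D(G) generated by G, the position G is Right U-strong: for every Right end X in U (necessarily of the form k copies of the conjugate of G), Right moving first wins G + X under misère play. -/

import Mathlib

/-!
Call a game odd if both players have a move and every option is even, and even if every option
is odd. In misère play the player to move wins an even game (either there is no move, which wins,
or there is a move to an odd game) and loses an odd one (every move leads to an even game).
Parity adds like `xor` under disjunctive sums and survives conjugation; `0` and `G = {·|*}` are
even since `*` is odd, so every `G + k·(conj G)` is even and Right, moving first, wins it.
-/

/-- A (finite) partizan game: finite lists of Left and Right options. -/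
inductive Gm : Type where
  | node : List Gm → List Gm → Gm

/-- The Left options of a game. -/
def Gm.leftOpts : Gm → List Gm
  | .node l _ => l

/-- The Right options of a game. -/
def Gm.rightOpts : Gm → List Gm
  | .node _ r => r

/-- Disjunctive sum of games. -/
def Gm.add : Gm → Gm → Gm
  | .node gl gr, .node hl hr =>
      .node
        (gl.attach.map (fun g => Gm.add g.1 (.node hl hr)) ++
         hl.attach.map (fun h => Gm.add (.node gl gr) h.1))
        (gr.attach.map (fun g => Gm.add g.1 (.node hl hr)) ++
         hr.attach.map (fun h => Gm.add (.node gl gr) h.1))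
termination_by g h => sizeOf g + sizeOf h
decreasing_by
  all_goals first
  | (have := List.sizeOf_lt_of_mem g.2; simp; omega)
  | (have := List.sizeOf_lt_of_mem h.2; simp; omega)

mutual
/-- Left, moving first, wins `G` under misère play (a player unable to move wins):
`G` is a Left end, or some Left option is a loss for Right moving first. -/
def Gm.lwins : Gm → Prop
  | .node l _ => l = [] ∨ ∃ g ∈ l.attach, ¬ Gm.rwins g.1
termination_by G => sizeOf G
decreasing_by have := List.sizeOf_lt_of_mem g.2; simp; omega

/-- Right, moving first, wins `G` under misère play. -/
def Gm.rwins : Gm → Prop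
  | .node _ r => r = [] ∨ ∃ g ∈ r.attach, ¬ Gm.lwins g.1
termination_by G => sizeOf G
decreasing_by have := List.sizeOf_lt_of_mem g.2; simp; omega
end

/-- The game `0`. -/
def Gm.zero : Gm := .node [] []

/-- The game `* = {0|0}`. -/
def Gm.star : Gm := .node [Gm.zero] [Gm.zero]

/-- The conjugate of a game: swap the roles of Left and Right everywhere. -/
def Gm.conj : Gm → Gm
  | .node l r =>
      .node (r.attach.map (fun g => Gm.conj g.1)) (l.attach.map (fun g => Gm.conj g.1))
termination_by G => sizeOf G
decreasing_by
  all_goals (have := List.sizeOf_lt_of_mem g.2; simp; omega)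

/-- `k` copies of `x`, added together. -/
def Gm.ksum : ℕ → Gm → Gm
  | 0, _ => Gm.zero
  | n+1, x => (Gm.ksum n x).add x

namespace Gm

theorem lwins_iff (X : Gm) : X.lwins ↔ X.leftOpts = [] ∨ ∃ y ∈ X.leftOpts, ¬ y.rwins := by
  cases X
  rw [lwins]
  simp [leftOpts]

theorem rwins_iff (X : Gm) : X.rwins ↔ X.rightOpts = [] ∨ ∃ y ∈ X.rightOpts, ¬ y.lwins := by
  cases X
  rw [rwins]
  simp [rightOpts]

theorem leftOpts_add (X Y : Gm) :
    (X.add Y).leftOpts = X.leftOpts.map (·.add Y) ++ Y.leftOpts.map X.add := by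
  cases X; cases Y
  rw [add]
  simp [leftOpts]

theorem rightOpts_add (X Y : Gm) :
    (X.add Y).rightOpts = X.rightOpts.map (·.add Y) ++ Y.rightOpts.map X.add := by
  cases X; cases Y
  rw [add]
  simp [rightOpts]

theorem leftOpts_conj (X : Gm) : X.conj.leftOpts = X.rightOpts.map conj := by
  cases X
  rw [conj]
  simp [leftOpts, rightOpts]

theorem rightOpts_conj (X : Gm) : X.conj.rightOpts = X.leftOpts.map conj := by
  cases X
  rw [conj]
  simp [leftOpts, rightOpts]

inductive HasParity : Bool → Gm → Prop
  | intro {odd : Bool} {X : Gm}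
      (leftOpts_ne_nil : odd → X.leftOpts ≠ [])
      (rightOpts_ne_nil : odd → X.rightOpts ≠ [])
      (left : ∀ y ∈ X.leftOpts, HasParity (!odd) y)
      (right : ∀ y ∈ X.rightOpts, HasParity (!odd) y) : HasParity odd X

theorem hasParity_zero : zero.HasParity false :=
  .intro nofun nofun nofun nofun

theorem hasParity_star : star.HasParity true :=
  .intro (by simp [star, leftOpts]) (by simp [star, rightOpts])
    (by simpa [star, leftOpts] using hasParity_zero) (by simpa [star, rightOpts] using hasParity_zero)

namespace HasParity

variable {odd p q : Bool} {X Y : Gm}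

theorem outcome (h : X.HasParity odd) :
    (X.lwins ↔ odd = false) ∧ (X.rwins ↔ odd = false) := by
  induction h with
  | @intro odd X leftOpts_ne_nil rightOpts_ne_nil _ _ ihl ihr =>
    rw [lwins_iff, rwins_iff]
    cases odd with
    | false =>
      simp only [Bool.not_false, Bool.true_eq_false, iff_false] at ihl ihr
      refine ⟨iff_of_true ?_ rfl, iff_of_true ?_ rfl⟩
      · refine or_iff_not_imp_left.2 fun hl => ?_
        obtain ⟨y, hy⟩ := List.exists_mem_of_ne_nil _ hl
        exact ⟨y, hy, (ihl y hy).2⟩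
      · refine or_iff_not_imp_left.2 fun hr => ?_
        obtain ⟨y, hy⟩ := List.exists_mem_of_ne_nil _ hr
        exact ⟨y, hy, (ihr y hy).1⟩
    | true =>
      simp only [Bool.not_true, iff_true] at ihl ihr
      refine ⟨iff_of_false ?_ Bool.noConfusion, iff_of_false ?_ Bool.noConfusion⟩
      · rintro (hl | ⟨y, hy, hwin⟩)
        exacts [leftOpts_ne_nil rfl hl, hwin (ihl y hy).2]
      · rintro (hr | ⟨y, hy, hwin⟩)
        exacts [rightOpts_ne_nil rfl hr, hwin (ihr y hy).1]

theorem conj (h : X.HasParity odd) : X.conj.HasParity odd := by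
  induction h with
  | intro leftOpts_ne_nil rightOpts_ne_nil _ _ ihl ihr =>
    refine .intro ?_ ?_ ?_ ?_
    · simpa [leftOpts_conj] using rightOpts_ne_nil
    · simpa [rightOpts_conj] using leftOpts_ne_nil
    · simpa [leftOpts_conj] using ihr
    · simpa [rightOpts_conj] using ihl

theorem add (hX : X.HasParity p) (hY : Y.HasParity q) :
    (X.add Y).HasParity (p ^^ q) := by
  induction hX generalizing q Y with
  | @intro p X hXl hXr _ _ ihXl ihXr =>
  induction hY with
  | @intro q Y hYl hYr hYl' hYr' ihYl ihYr =>
    have hY : Y.HasParity q := .intro hYl hYr hYl' hYr'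
    have odd_or : (p ^^ q) → p ∨ q := by cases p <;> cases q <;> simp
    refine .intro ?_ ?_ ?_ ?_
    · intro hpq
      simp only [leftOpts_add, ne_eq, List.append_eq_nil_iff, List.map_eq_nil_iff, not_and_or]
      exact (odd_or hpq).imp (hXl ·) (hYl ·)
    · intro hpq
      simp only [rightOpts_add, ne_eq, List.append_eq_nil_iff, List.map_eq_nil_iff, not_and_or]
      exact (odd_or hpq).imp (hXr ·) (hYr ·)
    · rw [leftOpts_add]
      intro _ h
      rcases List.mem_append.1 h with h | h <;> obtain ⟨y, hy, rfl⟩ := List.mem_map.1 h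
      exacts [Bool.not_bne p q ▸ ihXl y hy hY, Bool.bne_not p q ▸ ihYl y hy]
    · rw [rightOpts_add]
      intro _ h
      rcases List.mem_append.1 h with h | h <;> obtain ⟨y, hy, rfl⟩ := List.mem_map.1 h
      exacts [Bool.not_bne p q ▸ ihXr y hy hY, Bool.bne_not p q ▸ ihYr y hy]

theorem ksum (h : X.HasParity false) (k : ℕ) : (Gm.ksum k X).HasParity false := by
  induction k with
  | zero => exact hasParity_zero
  | succ k ih => exact ih.add h

end HasParity

end Gm

/-- let `G = {·|*}` and `U = D(G)`. Then `G` is Right `U`-strong: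
for every Right end `X` of `U` (necessarily of the form `k` copies of the
conjugate of `G`), Right moving first wins `G + X` under misère play. -/
theorem stmt15 :
    ∀ k : ℕ,
      Gm.rwins ((Gm.node [] [Gm.star]).add
        (Gm.ksum k (Gm.conj (Gm.node [] [Gm.star])))) := by
  intro k
  have hG : (Gm.node [] [Gm.star]).HasParity false :=
    .intro nofun nofun nofun (by simpa [Gm.rightOpts] using Gm.hasParity_star)
  exact (hG.add (hG.conj.ksum k)).outcome.2.2 rfl
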